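/- There exists a constant C > 0 such that for all j ∈ {0,1,2} and all n ∈ ℤ+β_j: |d_j(n)| ≤ C·√|n|. -/

import Mathlib

open scoped BigOperators
open Finset Filter MeasureTheory
open scoped Classical

noncomputable section

namespace Paper

/-- The quadratic form `Q(v) = 12 v₁² − 2 v₂²` on `ℝ²`. -/
def Qf (v : ℝ × ℝ) : ℝ := 12 * v.1 ^ 2 - 2 * v.2 ^ 2

/-- The quadratic form on `ℚ²`. -/
def Qq (μ : ℚ × ℚ) : ℚ := 12 * μ.1 ^ 2 - 2 * μ.2 ^ 2

def betaR : ℕ → ℝ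
  | 0 => 1 / 48
  | 1 => 25 / 48
  | _ => 23 / 24

def betaQ : ℕ → ℚ
  | 0 => 1 / 48
  | 1 => 25 / 48
  | _ => 23 / 24

def DeltaR : ℕ → ℝ
  | 0 => -1 / 48
  | 1 => 23 / 48
  | _ => 11 / 12

def Splus : ℕ → Finset (ℚ × ℚ)
  | 0 => {(7/24, 0), (17/24, 0), (11/24, 1/2), (13/24, 1/2)}
  | 1 => {(11/24, 0), (13/24, 0), (7/24, 1/2), (17/24, 1/2)}
  | _ => {(5/12, 1/4), (7/12, 1/4), (5/12, 3/4), (7/12, 3/4)}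

def Sminus : ℕ → Finset (ℚ × ℚ)
  | 0 => {(1/24, 0), (23/24, 0), (5/24, 1/2), (19/24, 1/2)}
  | 1 => {(5/24, 0), (19/24, 0), (1/24, 1/2), (23/24, 1/2)}
  | _ => {(1/12, 1/4), (11/12, 1/4), (1/12, 3/4), (11/12, 3/4)}

/-- The Fourier coefficients `a_μ(n)` of the false-indefinite theta function:
for `n > 0` the sum of `(1/2)(1 + sgn(2v₁+v₂)sgn(2v₁−v₂))` over `v ∈ ℤ²+μ` with `Q(v)=n`;
for `n < 0` the sum of `(1/2)(1 − sgn(3v₁+v₂)sgn(3v₁−v₂))` over such `v`. -/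
def aCoef (μ : ℚ × ℚ) (n : ℚ) : ℝ :=
  if 0 < n then
    (1 / 2) * ∑' v : ℤ × ℤ,
      (if Qf ((v.1 : ℝ) + (μ.1 : ℝ), (v.2 : ℝ) + (μ.2 : ℝ)) = (n : ℝ) then
        1 + Real.sign (2 * ((v.1 : ℝ) + (μ.1 : ℝ)) + ((v.2 : ℝ) + (μ.2 : ℝ))) *
            Real.sign (2 * ((v.1 : ℝ) + (μ.1 : ℝ)) - ((v.2 : ℝ) + (μ.2 : ℝ)))
      else 0)
  else
    (1 / 2) * ∑' v : ℤ × ℤ,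
      (if Qf ((v.1 : ℝ) + (μ.1 : ℝ), (v.2 : ℝ) + (μ.2 : ℝ)) = (n : ℝ) then
        1 - Real.sign (3 * ((v.1 : ℝ) + (μ.1 : ℝ)) + ((v.2 : ℝ) + (μ.2 : ℝ))) *
            Real.sign (3 * ((v.1 : ℝ) + (μ.1 : ℝ)) - ((v.2 : ℝ) + (μ.2 : ℝ)))
      else 0)

/-- The Fourier coefficients `d_j(n)`, meaningful for `n ∈ ℤ + β_j`. -/
def dCoef (j : ℕ) (n : ℚ) : ℝ :=
  (1 / 2) * ((∑ μ ∈ Splus j, aCoef μ n) - ∑ μ ∈ Sminus j, aCoef μ n)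

/-- `d_j(m + β_j)` as a function of `m : ℤ`. -/
def dInt (j : ℕ) (m : ℤ) : ℝ := dCoef j ((m : ℚ) + betaQ j)

/-- Partial sums `∑_{n ∈ ℤ+β, |n| ≤ X} f(n)` of a function on the coset `ℤ + β`,
encoded by `g : ℤ → ℂ`, `g m = f (m + β)`. -/
def symPartial (β : ℝ) (g : ℤ → ℂ) (X : ℝ) : ℂ :=
  ∑ m ∈ Finset.Icc ⌈-X - β⌉ ⌊X - β⌋, g m

/-- Convergence of the symmetric sum `Σ*_{n∈ℤ+β} f(n)` to `L`. -/
def HasSymSum (β : ℝ) (g : ℤ → ℂ) (L : ℂ) : Prop :=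
  Tendsto (symPartial β g) atTop (nhds L)

/-- The value of the symmetric sum (junk when it does not converge). -/
def symLim (β : ℝ) (g : ℤ → ℂ) : ℂ :=
  limUnder atTop (symPartial β g)

/-- The partition function `p(m)`. -/
def pFun (m : ℕ) : ℕ := Fintype.card (Nat.Partition m)

/-- The coefficients `α_j(n) = Σ_{m=0}^n p(m) d_j(n − m + β_j)`. -/
def alphaC (j : ℕ) (n : ℕ) : ℝ :=
  ∑ m ∈ Finset.range (n + 1), (pFun m : ℝ) * dCoef j ((n : ℚ) - (m : ℚ) + betaQ j)

/-- The `K`-Bessel function `K_ν(x) = ∫₀^∞ e^{−x cosh u} cosh(νu) du`. -/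
def besselK (ν x : ℝ) : ℝ :=
  ∫ u in Set.Ioi (0 : ℝ), Real.exp (-x * Real.cosh u) * Real.cosh (ν * u)

/-- `I_{1/2}(x) = √(2/(πx)) sinh x`. -/
def besselIhalf (x : ℝ) : ℝ := Real.sqrt (2 / (Real.pi * x)) * Real.sinh x

/-- `𝒦(x) = x K₁(x)`. -/
def KKfun (x : ℝ) : ℝ := x * besselK 1 x

/-- The Maass form `U_j(τ) = √τ₂ Σ_{n∈ℤ+β_j} d_j(n) K₀(2π|n|τ₂) e^{2πinτ₁}`. -/
def Ufun (j : ℕ) (τ : ℂ) : ℂ :=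
  (Real.sqrt τ.im : ℂ) * ∑' m : ℤ,
    ((dInt j m : ℝ) : ℂ) * ((besselK 0 (2 * Real.pi * |(m : ℝ) + betaR j| * τ.im) : ℝ) : ℂ) *
      Complex.exp (2 * Real.pi * Complex.I * (((m : ℝ) + betaR j : ℝ) : ℂ) * (τ.re : ℂ))

def t1c : ℝ := Real.log (Real.sqrt 3 - Real.sqrt 2)
def t2c : ℝ := Real.log (Real.sqrt 3 + Real.sqrt 2)

/-- Summand of the completed theta function `Θ̂_μ`. -/
def thetaTerm (μ : ℚ × ℚ) (τ : ℂ) (v : ℤ × ℤ) : ℂ :=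
  Complex.exp (2 * Real.pi * Complex.I *
      ((Qf ((v.1 : ℝ) + (μ.1 : ℝ), (v.2 : ℝ) + (μ.2 : ℝ)) : ℝ) : ℂ) * τ) *
    (((∫ t in t1c..t2c, Real.exp (-Real.pi *
        (4 * Real.sqrt 3 * ((v.1 : ℝ) + (μ.1 : ℝ)) * Real.sinh t -
         2 * Real.sqrt 2 * ((v.2 : ℝ) + (μ.2 : ℝ)) * Real.cosh t) ^ 2 * τ.im)) : ℝ) : ℂ)

/-- The modular completion `Û_j`. -/
def UhatFun (j : ℕ) (τ : ℂ) : ℂ :=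
  ((Real.sqrt τ.im / 2 : ℝ) : ℂ) *
    ((∑ μ ∈ Splus j, ∑' v : ℤ × ℤ, thetaTerm μ τ v) -
     ∑ μ ∈ Sminus j, ∑' v : ℤ × ℤ, thetaTerm μ τ v)

/-- The bilinear form `B(v,w) = 24v₁w₁ − 4v₂w₂`. -/
def Bform (v w : ℝ × ℝ) : ℝ := 24 * v.1 * w.1 - 4 * v.2 * w.2

def nuRef : ℕ → ℚ × ℚ
  | 0 => (7/24, 0)
  | 1 => (11/24, 0)
  | _ => (5/12, 1/4)

/-- The theta multiplier `ψ_{M,Q}(μ,ν)` for `M = [[a,b],[c,d]]`, `c > 0`. -/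
def psiMQ (a d : ℤ) (c : ℕ) (μ ν : ℚ × ℚ) : ℂ :=
  ((1 / (4 * Real.sqrt 6 * c) : ℝ) : ℂ) *
    ∑ m ∈ Finset.range c ×ˢ Finset.range c,
      Complex.exp (2 * Real.pi * Complex.I / (c : ℂ) *
        ((a : ℂ) * ((Qf ((m.1 : ℝ) + (μ.1 : ℝ), (m.2 : ℝ) + (μ.2 : ℝ)) : ℝ) : ℂ) -
         ((Bform ((m.1 : ℝ) + (μ.1 : ℝ), (m.2 : ℝ) + (μ.2 : ℝ)) ((ν.1 : ℝ), (ν.2 : ℝ)) : ℝ) : ℂ) +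
         (d : ℂ) * ((Qf ((ν.1 : ℝ), (ν.2 : ℝ)) : ℝ) : ℂ)))

/-- The multiplier `Ψ_M(j,ℓ)`. -/
def PsiM (a d : ℤ) (c : ℕ) (j l : ℕ) : ℂ :=
  (∑ μ ∈ Splus j, psiMQ a d c μ (nuRef l)) - ∑ μ ∈ Sminus j, psiMQ a d c μ (nuRef l)

/-- The matrix `Ψ_S = (1/2)[[1,1,√2],[1,1,−√2],[√2,−√2,0]]`. -/
def PsiS (j l : ℕ) : ℂ :=
  match j, l with
  | 0, 0 => 1 / 2
  | 0, 1 => 1 / 2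
  | 0, _ => ((Real.sqrt 2 : ℝ) : ℂ) / 2
  | 1, 0 => 1 / 2
  | 1, 1 => 1 / 2
  | 1, _ => -(((Real.sqrt 2 : ℝ) : ℂ) / 2)
  | _, 0 => ((Real.sqrt 2 : ℝ) : ℂ) / 2
  | _, 1 => -(((Real.sqrt 2 : ℝ) : ℂ) / 2)
  | _, _ => 0

/-- `h′`: the inverse of `−h` modulo `k`, taken in `{0,…,k−1}`. -/
def hprime (h k : ℕ) : ℕ := ZMod.val (-(h : ZMod k))⁻¹

/-- The Dedekind sum `s(h,k)`. -/
def dedekindS (h k : ℕ) : ℝ :=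
  ∑ r ∈ Finset.Ico 1 k,
    ((r : ℝ) / k) * (((h : ℝ) * r) / k - ⌊((h : ℝ) * r) / k⌋ - 1 / 2)

/-- The eta multiplier `ν_η(M_{h,k})`. -/
def nuEta (h k : ℕ) : ℂ :=
  Complex.exp (Real.pi * Complex.I *
    (((((h : ℝ) - (hprime h k : ℝ)) / (12 * k) - 1 / 4 + dedekindS (hprime h k) k : ℝ)) : ℂ))

/-- The multiplier `ψ_{h,k}(j,ℓ) = e^{−πi/4} Ψ_{M_{h,k}}(j,ℓ)/ν_η(M_{h,k})`, where
`M_{h,k}` has upper-left entry `h`, lower-left entry `k` and lower-right entry `−h′`. -/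
def psiHK (h k j l : ℕ) : ℂ :=
  Complex.exp (-Real.pi * Complex.I / 4) * PsiM (h : ℤ) (-(hprime h k : ℤ)) k j l / nuEta h k

/-- Summand of the integral kernel `Φ_{ℓ,x}(t)`. -/
def PhiTerm (l : ℕ) (x t : ℝ) (m : ℤ) : ℂ :=
  ((dInt l m : ℝ) : ℂ) *
    Complex.exp (2 * Real.pi * Complex.I * (x : ℂ) * (((m : ℝ) + betaR l : ℝ) : ℂ)) /
    ((t : ℂ) - (((m : ℝ) + betaR l : ℝ) : ℂ))

/-- The integral kernel `Φ_{ℓ,x}(t) = Σ*_{m∈ℤ+β_ℓ} d_ℓ(m) e^{2πixm}/(t−m)`. -/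
def PhiKer (l : ℕ) (x t : ℝ) : ℂ := symLim (betaR l) (PhiTerm l x t)

/-- Approximants of the principal value integral over `[0,1/24]` with pole at `1/48`. -/
def pv124Partial (F : ℝ → ℂ) (ε : ℝ) : ℂ :=
  (∫ t in (0 : ℝ)..(1 / 48 - ε), F t) + ∫ t in (1 / 48 + ε : ℝ)..(1 / 24 : ℝ), F t

def HasPV124 (F : ℝ → ℂ) (L : ℂ) : Prop :=
  Tendsto (pv124Partial F) (nhdsWithin 0 (Set.Ioi 0)) (nhds L)

def pv124 (F : ℝ → ℂ) : ℂ := limUnder (nhdsWithin 0 (Set.Ioi 0)) (pv124Partial F)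

/-- Approximants of `PV ∫_a^∞ F`, pole at `n`. -/
def pvFromPartial (a : ℝ) (F : ℝ → ℂ) (n : ℝ) (ε : ℝ) : ℂ :=
  (∫ t in a..(n - ε), F t) + ∫ t in Set.Ioi (n + ε), F t

/-- `PV ∫_a^∞ F dt` where `F` has (at most) a pole at `n`; an ordinary improper
integral when `n ≤ a`. -/
def pvFrom (a : ℝ) (F : ℝ → ℂ) (n : ℝ) : ℂ :=
  if a < n then limUnder (nhdsWithin 0 (Set.Ioi 0)) (pvFromPartial a F n)
  else ∫ t in Set.Ioi a, F t

def HasPvFrom (a : ℝ) (F : ℝ → ℂ) (n : ℝ) (L : ℂ) : Prop :=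
  if a < n then Tendsto (pvFromPartial a F n) (nhdsWithin 0 (Set.Ioi 0)) (nhds L)
  else (IntegrableOn F (Set.Ioi a) ∧ ∫ t in Set.Ioi a, F t = L)

/-- The Wirtinger derivative `U_j′(z) = (1/2)(∂_{z₁} − i ∂_{z₂}) U_j (z)`. -/
def UfunDeriv (j : ℕ) (z : ℂ) : ℂ :=
  (1 / 2) * (deriv (fun x : ℝ => Ufun j (⟨x, z.im⟩ : ℂ)) z.re -
    Complex.I * deriv (fun y : ℝ => Ufun j (⟨z.re, y⟩ : ℂ)) z.im)

/-- Integrand of the obstruction to modularity `𝒰_{j,ρ}(τ)`. -/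
def obstructionIntegrand (j : ℕ) (ρ : ℝ) (τ : ℂ) (t : ℝ) : ℂ :=
  (4 * Complex.I * (t : ℂ) * UfunDeriv j ((ρ : ℂ) + (t : ℂ) * Complex.I) -
      (((t : ℂ) + Complex.I * (τ - (ρ : ℂ))) / ((t : ℂ) - Complex.I * (τ - (ρ : ℂ)))) *
        Ufun j ((ρ : ℂ) + (t : ℂ) * Complex.I)) /
    (((Real.sqrt t : ℝ) : ℂ) * (((t : ℂ) ^ 2 + (τ - (ρ : ℂ)) ^ 2) ^ ((1 : ℂ) / 2)))

/-- The obstruction to modularity `𝒰_{j,ρ}(τ)`. -/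
def obstruction (j : ℕ) (ρ : ℝ) (τ : ℂ) : ℂ :=
  ((1 / (2 * Real.pi) : ℝ) : ℂ) * ∫ t in Set.Ioi (0 : ℝ), obstructionIntegrand j ρ τ t

/-- `𝒦_{τ,d/c}(n)` expressed with `w = τ + d/c`. -/
def KKtau (w : ℂ) (n : ℝ) : ℂ :=
  ∫ t in Set.Ioi (0 : ℝ),
    (t : ℂ) * (Complex.I * w * ((besselK 0 (2 * Real.pi * |n| * t) : ℝ) : ℂ) -
        ((Real.sign n : ℝ) : ℂ) * (t : ℂ) * ((besselK 1 (2 * Real.pi * |n| * t) : ℝ) : ℂ)) /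
      (((t : ℂ) ^ 2 + w ^ 2) ^ ((3 : ℂ) / 2))

/-- The sine integral `Si(w) = ∫₀^w sin t / t dt`, along the segment `[0,w]`. -/
def SiFun (w : ℂ) : ℂ := ∫ s in (0 : ℝ)..1, w * Complex.sin ((s : ℂ) * w) / ((s : ℂ) * w)

/-- The cosine integral `Ci(w) = γ + Log w + ∫₀^w (cos t − 1)/t dt` on `ℂ∖(−∞,0]`. -/
def CiFun (w : ℂ) : ℂ :=
  ((Real.eulerMascheroniConstant : ℝ) : ℂ) + Complex.log w +
    ∫ s in (0 : ℝ)..1, w * (Complex.cos ((s : ℂ) * w) - 1) / ((s : ℂ) * w)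

def fTrig (w : ℂ) : ℂ :=
  CiFun w * Complex.sin w + Complex.cos w * (((Real.pi / 2 : ℝ) : ℂ) - SiFun w)

def gTrig (w : ℂ) : ℂ :=
  -CiFun w * Complex.cos w + Complex.sin w * (((Real.pi / 2 : ℝ) : ℂ) - SiFun w)

/-- The holomorphic q-series `u_j(τ) = Σ_{n∈ℤ+β_j, n>0} d_j(n) e^{2πinτ}`. -/
def ufun (j : ℕ) (τ : ℂ) : ℂ :=
  ∑' m : ℕ, ((dInt j (m : ℤ) : ℝ) : ℂ) *
    Complex.exp (2 * Real.pi * Complex.I * (((m : ℝ) + betaR j : ℝ) : ℂ) * τ)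

/-- `𝒜 = log(√2+√3)/√6`. -/
def AAconst : ℝ := Real.log (Real.sqrt 2 + Real.sqrt 3) / Real.sqrt 6

/-- `a_{c,μ,r}(n)`: coefficients of the rescaled lattice `ℤ² + (μ+r)/c` with the
rescaled quadratic form `c²Q`. -/
def aShift (c : ℕ) (r : ℕ × ℕ) (μ : ℚ × ℚ) (n : ℚ) : ℝ :=
  if 0 < n then
    (1 / 2) * ∑' v : ℤ × ℤ,
      (if (c : ℝ) ^ 2 * Qf ((v.1 : ℝ) + (((μ.1 + r.1) / c : ℚ) : ℝ),
            (v.2 : ℝ) + (((μ.2 + r.2) / c : ℚ) : ℝ)) = (n : ℝ) then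
        1 + Real.sign (2 * ((v.1 : ℝ) + (((μ.1 + r.1) / c : ℚ) : ℝ)) +
              ((v.2 : ℝ) + (((μ.2 + r.2) / c : ℚ) : ℝ))) *
            Real.sign (2 * ((v.1 : ℝ) + (((μ.1 + r.1) / c : ℚ) : ℝ)) -
              ((v.2 : ℝ) + (((μ.2 + r.2) / c : ℚ) : ℝ)))
      else 0)
  else
    (1 / 2) * ∑' v : ℤ × ℤ,
      (if (c : ℝ) ^ 2 * Qf ((v.1 : ℝ) + (((μ.1 + r.1) / c : ℚ) : ℝ),
            (v.2 : ℝ) + (((μ.2 + r.2) / c : ℚ) : ℝ)) = (n : ℝ) then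
        1 - Real.sign (3 * ((v.1 : ℝ) + (((μ.1 + r.1) / c : ℚ) : ℝ)) +
              ((v.2 : ℝ) + (((μ.2 + r.2) / c : ℚ) : ℝ))) *
            Real.sign (3 * ((v.1 : ℝ) + (((μ.1 + r.1) / c : ℚ) : ℝ)) -
              ((v.2 : ℝ) + (((μ.2 + r.2) / c : ℚ) : ℝ)))
      else 0)

/-- `Σ_{n∈ℤ+Q(μ), 0<n≤X} a_{c,μ,r}(n)`. -/
def aShiftSumPos (c : ℕ) (r : ℕ × ℕ) (μ : ℚ × ℚ) (X : ℝ) : ℝ :=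
  ∑ m ∈ Finset.Icc (⌊-((Qq μ : ℝ))⌋ + 1) ⌊X - ((Qq μ : ℝ))⌋, aShift c r μ ((m : ℚ) + Qq μ)

/-- `Σ_{n∈ℤ+Q(μ), −X≤n<0} a_{c,μ,r}(n)`. -/
def aShiftSumNeg (c : ℕ) (r : ℕ × ℕ) (μ : ℚ × ℚ) (X : ℝ) : ℝ :=
  ∑ m ∈ Finset.Icc ⌈-X - ((Qq μ : ℝ))⌉ (⌈-((Qq μ : ℝ))⌉ - 1), aShift c r μ ((m : ℚ) + Qq μ)

/-- `#{(r₁,r₂) ∈ {0,…,c−1}² : Q(μ+(r₁,r₂)) − (r+β_j) ∈ cℤ}`. -/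
def countCong (j : ℕ) (r c : ℕ) (μ : ℚ × ℚ) : ℕ :=
  ((Finset.range c ×ˢ Finset.range c).filter (fun p =>
    ((Qq (μ.1 + (p.1 : ℚ), μ.2 + (p.2 : ℚ)) - ((r : ℚ) + betaQ j)) / (c : ℚ)).den = 1)).card

/-- The density `𝒜_{j,r,c}`. -/
def AAjrc (j : ℕ) (r c : ℕ) : ℝ :=
  (AAconst / (2 * (c : ℝ) ^ 2)) *
    ((∑ μ ∈ Splus j, (countCong j r c μ : ℝ)) - ∑ μ ∈ Sminus j, (countCong j r c μ : ℝ))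

/-- `Σ_{n∈ℤ+β_j, 0<n≤X, n ≡ r+β_j (mod c)} d_j(n)`. -/
def dSumPos (j : ℕ) (r c : ℕ) (X : ℝ) : ℝ :=
  ∑ m ∈ (Finset.Icc (⌊-(betaR j)⌋ + 1) ⌊X - betaR j⌋).filter
      (fun m => (c : ℤ) ∣ (m - (r : ℤ))), dInt j m

/-- `Σ_{n∈ℤ+β_j, −X≤n<0, n ≡ r+β_j (mod c)} d_j(n)`. -/
def dSumNeg (j : ℕ) (r c : ℕ) (X : ℝ) : ℝ :=
  ∑ m ∈ (Finset.Icc ⌈-X - betaR j⌉ (⌈-(betaR j)⌉ - 1)).filter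
      (fun m => (c : ℤ) ∣ (m - (r : ℤ))), dInt j m


/-- The exponential factor `e^{−2πidn/c}` at `n = m + β`. -/
def eTerm (c : ℕ) (d : ℤ) (β : ℝ) (m : ℤ) : ℂ :=
  Complex.exp (-(2 * Real.pi * Complex.I) * (d : ℂ) * (((m : ℝ) + β : ℝ) : ℂ) / (c : ℂ))

/-- Summand `d_j(n) e^{−2πidn/c} / n` of the symmetric sum. -/
def symTerm7 (j : ℕ) (c : ℕ) (d : ℤ) (m : ℤ) : ℂ :=
  ((dInt j m : ℝ) : ℂ) * eTerm c d (betaR j) m / ((((m : ℝ) + betaR j : ℝ)) : ℂ)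

/-- Summand of the series in Lemma 4.1 (inner series of the Mordell-type integral). -/
def mordellTerm6 (j : ℕ) (c : ℕ) (d : ℤ) (τ : ℂ) (t : ℝ) (m : ℤ) : ℂ :=
  ((dInt j m : ℝ) : ℂ) * eTerm c d (betaR j) m *
    ((t : ℂ) * ((besselK 0 (2 * Real.pi * |(m : ℝ) + betaR j| * t) : ℝ) : ℂ) /
      (((t : ℂ) ^ 2 + (τ + (((d : ℝ) / (c : ℝ) : ℝ) : ℂ)) ^ 2) ^ ((1 : ℂ) / 2))) *
    (2 * Real.pi * (((m : ℝ) + betaR j : ℝ) : ℂ) +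
      Complex.I * (τ + (((d : ℝ) / (c : ℝ) : ℝ) : ℂ)) /
        ((t : ℂ) ^ 2 + (τ + (((d : ℝ) / (c : ℝ) : ℝ) : ℂ)) ^ 2))

/-- Summand `d_j(n) e^{−2πidn/c} 𝒦_{τ,d/c}(n)`. -/
def KKterm10 (j : ℕ) (c : ℕ) (d : ℤ) (τ : ℂ) (m : ℤ) : ℂ :=
  ((dInt j m : ℝ) : ℂ) * eTerm c d (betaR j) m *
    KKtau (τ + (((d : ℝ) / (c : ℝ) : ℝ) : ℂ)) ((m : ℝ) + betaR j)

/-- `PV ∫₀^∞ e^{2πiwt}/(t−n) dt`. -/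
def mordellPV (w : ℂ) (n : ℝ) : ℂ :=
  pvFrom 0 (fun t : ℝ => Complex.exp (2 * Real.pi * Complex.I * w * (t : ℂ)) / ((t : ℂ) - (n : ℂ))) n

/-- Summand of the symmetric sum defining `ℐ_{ℓ,−d/c}(τ)`. -/
def mordellITerm (l : ℕ) (c : ℕ) (d : ℤ) (τ : ℂ) (m : ℤ) : ℂ :=
  ((dInt l m : ℝ) : ℂ) * eTerm c d (betaR l) m *
    mordellPV (τ + (((d : ℝ) / (c : ℝ) : ℝ) : ℂ)) ((m : ℝ) + betaR l)

/-- `ℐ_{ℓ,−d/c}(τ)`. -/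
def mordellI (l : ℕ) (c : ℕ) (d : ℤ) (τ : ℂ) : ℂ :=
  (1 / ((Real.pi : ℂ) * Complex.I)) * symLim (betaR l) (mordellITerm l c d τ)

/-- Summand of the symmetric sum defining `ℐ^e_{ℓ,h′/k,d}(h′/k + iV)`. -/
def IeTerm (l : ℕ) (k : ℕ) (h' : ℤ) (dd : ℝ) (V : ℂ) (m : ℤ) : ℂ :=
  ((dInt l m : ℝ) : ℂ) *
    Complex.exp (2 * Real.pi * Complex.I * (h' : ℂ) * (((m : ℝ) + betaR l : ℝ) : ℂ) / (k : ℂ)) *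
    pvFrom dd (fun t : ℝ => Complex.exp (-(2 * Real.pi) * V * (t : ℂ)) /
        ((t : ℂ) - (((m : ℝ) + betaR l : ℝ) : ℂ))) ((m : ℝ) + betaR l)

/-- The non-principal part `ℐ^e_{ℓ,h′/k,d}(h′/k + iV)`. -/
def Ie (l : ℕ) (k : ℕ) (h' : ℤ) (dd : ℝ) (V : ℂ) : ℂ :=
  (Complex.exp (2 * Real.pi * (dd : ℂ) * V) / ((Real.pi : ℂ) * Complex.I)) *
    symLim (betaR l) (IeTerm l k h' dd V)

/-- The main term of the asymptotic expansion in Lemma 6.1. -/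
def mainExpr15 (j n : ℕ) : ℂ :=
  ((1 / (Real.pi * Real.sqrt (2 * ((n : ℝ) + DeltaR j))) : ℝ) : ℂ) *
    ∑ l ∈ Finset.range 3, PsiS j l *
      ∫ t in (0 : ℝ)..(1 / 96 : ℝ), PhiKer l 0 t *
        ((Real.exp (4 * Real.pi * Real.sqrt (((n : ℝ) + DeltaR j) * (1 / 24 - t))) : ℝ) : ℂ)

/-- `u ↦ (1 − 12u) Φ_{ℓ,0}(u(1−6u))`. -/
def hFun (l : ℕ) (u : ℝ) : ℂ := (((1 - 12 * u : ℝ)) : ℂ) * PhiKer l 0 (u * (1 - 6 * u))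

/-- The expansion coefficients `a_r`. -/
def aExp (j r : ℕ) : ℂ :=
  ((4 * Real.sqrt 3 / (4 * Real.pi * Real.sqrt 6) ^ (r + 2) : ℝ) : ℂ) *
    ∑ l ∈ Finset.range 3, PsiS j l * iteratedDeriv r (hFun l) 0

/-- Integrand of the principal value integral in the main theorem. -/
def intKer0 (j n l k h : ℕ) (t : ℝ) : ℂ :=
  PhiKer l ((hprime h k : ℝ) / k) t *
    ((((1 / 24 - t : ℝ) ^ ((1 : ℝ) / 4)) : ℝ) : ℂ) *
    ((besselIhalf (4 * Real.pi / k * Real.sqrt (((n : ℝ) + DeltaR j) * (1 / 24 - t))) : ℝ) : ℂ)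

/-- The main term of Theorem 1.1. -/
def mainExpr0 (j n : ℕ) : ℂ :=
  ((2 / ((n : ℝ) + DeltaR j) ^ ((1 : ℝ) / 4) : ℝ) : ℂ) *
    ∑ l ∈ Finset.range 3, ∑ k ∈ Finset.Icc 1 (Nat.sqrt n), (1 / (k : ℂ)) *
      ∑ h ∈ (Finset.range k).filter (fun h => Nat.gcd h k = 1),
        psiHK h k j l *
          Complex.exp (-(2 * Real.pi * Complex.I) / (k : ℂ) *
            ((hprime h k : ℂ) / 24 + (((n : ℝ) + DeltaR j : ℝ) : ℂ) * (h : ℂ))) *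
          pv124 (intKer0 j n l k h)

/-! For each shift `μ`, the points `v ∈ ℤ² + μ` with `Q(v) = n` and nonzero weight lie in a
cone (`|v₂| ≤ 2|v₁|` for `n > 0`, `|v₂| ≥ 3|v₁|` for `n ≤ 0`), which together with `Q(v) = n`
forces `v₁² ≤ |n|`. Each column `v₁ = const` meets the level set in at most two points, since `Q`
depends on `v₂` only through `v₂²`. Hence `|a_μ(n)| ≤ 2(2√|n| + 1)`, and the additive constant is
absorbed into `√|n|` because `|n| ≥ 1/48` on `ℤ + β_j`. -/

lemma abs_one_add_sign_mul_sign_le_two (s t : ℝ) : |1 + Real.sign s * Real.sign t| ≤ 2 := by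
  rcases Real.sign_apply_eq s with hs | hs | hs <;>
    rcases Real.sign_apply_eq t with ht | ht | ht <;> norm_num [hs, ht]

lemma abs_one_sub_sign_mul_sign_le_two (s t : ℝ) : |1 - Real.sign s * Real.sign t| ≤ 2 := by
  rcases Real.sign_apply_eq s with hs | hs | hs <;>
    rcases Real.sign_apply_eq t with ht | ht | ht <;> norm_num [hs, ht]

lemma mul_nonneg_of_one_add_sign_mul_sign_ne_zero {s t : ℝ}
    (h : 1 + Real.sign s * Real.sign t ≠ 0) : 0 ≤ s * t := by
  by_contra! hst
  rcases mul_neg_iff.1 hst with ⟨hs, ht⟩ | ⟨hs, ht⟩ <;>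
    norm_num [Real.sign_of_pos, Real.sign_of_neg, hs, ht] at h

lemma mul_nonpos_of_one_sub_sign_mul_sign_ne_zero {s t : ℝ}
    (h : 1 - Real.sign s * Real.sign t ≠ 0) : s * t ≤ 0 := by
  by_contra! hst
  rcases mul_pos_iff.1 hst with ⟨hs, ht⟩ | ⟨hs, ht⟩ <;>
    norm_num [Real.sign_of_pos, Real.sign_of_neg, hs, ht] at h

lemma card_le_two_of_sq_add_eq {T : Finset ℤ} {b : ℝ}
    (hT : ∀ y ∈ T, ∀ y' ∈ T, ((y : ℝ) + b) ^ 2 = ((y' : ℝ) + b) ^ 2) : T.card ≤ 2 := by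
  rcases T.eq_empty_or_nonempty with rfl | ⟨y₀, hy₀⟩
  · simp
  calc T.card ≤ ({(y₀ : ℝ) + b, -((y₀ : ℝ) + b)} : Finset ℝ).card := by
        refine card_le_card_of_injOn (fun y : ℤ => (y : ℝ) + b) (fun y hy => ?_) ?_
        · simpa using sq_eq_sq_iff_eq_or_eq_neg.1 (hT y hy y₀ hy₀)
        · intro y _ y' _ h
          exact_mod_cast add_right_cancel h
    _ ≤ 2 := card_le_two

lemma abs_sum_le_two_mul_of_sq_add_eq {g : ℤ → ℝ} {b B : ℝ} (J : Finset ℤ)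
    (hg : ∀ y, |g y| ≤ B)
    (hcol : ∀ y y', g y ≠ 0 → g y' ≠ 0 → ((y : ℝ) + b) ^ 2 = ((y' : ℝ) + b) ^ 2) :
    |∑ y ∈ J, g y| ≤ 2 * B := by
  have hB : 0 ≤ B := (abs_nonneg _).trans (hg 0)
  have hcard : (J.filter (g · ≠ 0)).card ≤ 2 := card_le_two_of_sq_add_eq fun y hy y' hy' =>
    hcol y y' (mem_filter.1 hy).2 (mem_filter.1 hy').2
  rw [← sum_filter_ne_zero]
  calc |∑ y ∈ J.filter (g · ≠ 0), g y| ≤ ∑ y ∈ J.filter (g · ≠ 0), |g y| := abs_sum_le_sum_abs _ _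
    _ ≤ (J.filter (g · ≠ 0)).card * B := by
        simpa using sum_le_card_nsmul _ _ _ fun y _ => hg y
    _ ≤ 2 * B := by gcongr; exact_mod_cast hcard

lemma mem_Icc_ceil_floor_of_sq_le {x : ℤ} {c r : ℝ} (h : ((x : ℝ) + c) ^ 2 ≤ r) :
    x ∈ Icc ⌈-c - √r⌉ ⌊-c + √r⌋ := by
  obtain ⟨hlo, hhi⟩ := abs_le.1 (Real.abs_le_sqrt h)
  rw [mem_Icc, Int.ceil_le, Int.le_floor]
  constructor <;> linarith

lemma card_Icc_ceil_floor_le (c r : ℝ) (hr : 0 ≤ r) :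
    ((Icc ⌈-c - r⌉ ⌊-c + r⌋).card : ℝ) ≤ 2 * r + 1 := by
  rw [Int.card_Icc, ← Int.cast_natCast, Int.toNat_eq_max, Int.cast_max, Int.cast_zero, max_le_iff]
  push_cast
  constructor <;> linarith [Int.floor_le (-c + r), Int.le_ceil (-c - r)]

lemma abs_tsum_le_of_two_per_column (f : ℤ × ℤ → ℝ) {a b N M B : ℝ} (hf : ∀ v, |f v| ≤ B)
    (hsupp : ∀ v, f v ≠ 0 → ((v.1 : ℝ) + a) ^ 2 ≤ N ∧ ((v.2 : ℝ) + b) ^ 2 ≤ M)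
    (hcol : ∀ x y y', f (x, y) ≠ 0 → f (x, y') ≠ 0 → ((y : ℝ) + b) ^ 2 = ((y' : ℝ) + b) ^ 2) :
    |∑' v, f v| ≤ 2 * B * (2 * √N + 1) := by
  have hB : 0 ≤ B := (abs_nonneg _).trans (hf 0)
  set I := Icc ⌈-a - √N⌉ ⌊-a + √N⌋
  have hzero : ∀ v ∉ I ×ˢ Icc ⌈-b - √M⌉ ⌊-b + √M⌋, f v = 0 := fun v hv => by
    by_contra hfv
    exact hv (mem_product.2 ⟨mem_Icc_ceil_floor_of_sq_le (hsupp v hfv).1,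
      mem_Icc_ceil_floor_of_sq_le (hsupp v hfv).2⟩)
  rw [tsum_eq_sum hzero, sum_product]
  calc |∑ x ∈ I, ∑ y ∈ _, f (x, y)| ≤ ∑ x ∈ I, |∑ y ∈ _, f (x, y)| := abs_sum_le_sum_abs _ _
    _ ≤ ∑ _x ∈ I, 2 * B :=
        sum_le_sum fun x _ => abs_sum_le_two_mul_of_sq_add_eq _ (fun y => hf _) (hcol x)
    _ = I.card * (2 * B) := by simp
    _ ≤ (2 * √N + 1) * (2 * B) := by
        gcongr; exact card_Icc_ceil_floor_le a (√N) (Real.sqrt_nonneg N)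
    _ = 2 * B * (2 * √N + 1) := by ring

lemma abs_tsum_levelSet_le (a b n N M B : ℝ) (w : ℝ × ℝ → ℝ) (hw : ∀ p, |w p| ≤ B)
    (hcone : ∀ p, Qf p = n → w p ≠ 0 → p.1 ^ 2 ≤ N ∧ p.2 ^ 2 ≤ M) :
    |∑' v : ℤ × ℤ, if Qf ((v.1 : ℝ) + a, (v.2 : ℝ) + b) = n
        then w ((v.1 : ℝ) + a, (v.2 : ℝ) + b) else 0| ≤ 2 * B * (2 * √N + 1) := by
  have hB : 0 ≤ B := (abs_nonneg _).trans (hw 0)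
  refine abs_tsum_le_of_two_per_column (a := a) (b := b) (M := M) _
    (fun v => ?_) (fun v hv => ?_) (fun x y y' h h' => ?_)
  · split_ifs
    exacts [hw _, by simpa using hB]
  · split_ifs at hv with hQ
    exacts [hcone _ hQ hv, absurd rfl hv]
  · split_ifs at h h' with hQ hQ'
    · simp only [Qf] at hQ hQ'
      linarith
    all_goals simp at h h'

lemma sq_le_of_Qf_eq_of_one_add_sign_ne_zero {x y n : ℝ} (hQ : Qf (x, y) = n)
    (hw : 1 + Real.sign (2 * x + y) * Real.sign (2 * x - y) ≠ 0) :
    x ^ 2 ≤ |n| ∧ y ^ 2 ≤ 2 * |n| := by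
  have hcone := mul_nonneg_of_one_add_sign_mul_sign_ne_zero hw
  simp only [Qf] at hQ
  constructor <;> nlinarith [le_abs_self n]

lemma sq_le_of_Qf_eq_of_one_sub_sign_ne_zero {x y n : ℝ} (hQ : Qf (x, y) = n)
    (hw : 1 - Real.sign (3 * x + y) * Real.sign (3 * x - y) ≠ 0) :
    x ^ 2 ≤ |n| ∧ y ^ 2 ≤ 2 * |n| := by
  have hcone := mul_nonpos_of_one_sub_sign_mul_sign_ne_zero hw
  simp only [Qf] at hQ
  constructor <;> nlinarith [neg_abs_le n]

lemma abs_aCoef_le (μ : ℚ × ℚ) (n : ℚ) : |aCoef μ n| ≤ 2 * (2 * √|(n : ℝ)| + 1) := by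
  rw [aCoef]
  split_ifs
  · have h := abs_tsum_levelSet_le μ.1 μ.2 n |(n : ℝ)| (2 * |(n : ℝ)|) 2
      (fun p => 1 + Real.sign (2 * p.1 + p.2) * Real.sign (2 * p.1 - p.2))
      (fun p => abs_one_add_sign_mul_sign_le_two _ _)
      (fun _ => sq_le_of_Qf_eq_of_one_add_sign_ne_zero)
    rw [abs_mul, abs_of_pos one_half_pos]
    linarith
  · have h := abs_tsum_levelSet_le μ.1 μ.2 n |(n : ℝ)| (2 * |(n : ℝ)|) 2
      (fun p => 1 - Real.sign (3 * p.1 + p.2) * Real.sign (3 * p.1 - p.2))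
      (fun p => abs_one_sub_sign_mul_sign_le_two _ _)
      (fun _ => sq_le_of_Qf_eq_of_one_sub_sign_ne_zero)
    rw [abs_mul, abs_of_pos one_half_pos]
    linarith

lemma card_Splus_le (j : ℕ) : (Splus j).card ≤ 4 := by
  rcases j with _ | _ | _ <;> exact card_le_four

lemma card_Sminus_le (j : ℕ) : (Sminus j).card ≤ 4 := by
  rcases j with _ | _ | _ <;> exact card_le_four

lemma abs_dCoef_le (j : ℕ) (n : ℚ) : |dCoef j n| ≤ 8 * (2 * √|(n : ℝ)| + 1) := by
  set A := 2 * (2 * √|(n : ℝ)| + 1)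
  have hsum : ∀ S : Finset (ℚ × ℚ), S.card ≤ 4 → |∑ μ ∈ S, aCoef μ n| ≤ 4 * A := fun S hS =>
    calc |∑ μ ∈ S, aCoef μ n| ≤ ∑ μ ∈ S, |aCoef μ n| := abs_sum_le_sum_abs _ _
      _ ≤ S.card * A := by simpa using sum_le_card_nsmul _ _ _ fun μ _ => abs_aCoef_le μ n
      _ ≤ 4 * A := by gcongr; exact_mod_cast hS
  have hplus := hsum _ (card_Splus_le j)
  have hminus := hsum _ (card_Sminus_le j)
  rw [dCoef, abs_mul, abs_of_pos one_half_pos]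
  linarith [abs_sub (∑ μ ∈ Splus j, aCoef μ n) (∑ μ ∈ Sminus j, aCoef μ n)]

lemma inv_le_abs_intCast_add_div {k : ℕ} (hk : 0 < k) (m c : ℤ) (hc : ¬ (k : ℤ) ∣ c) :
    (k : ℝ)⁻¹ ≤ |(m : ℝ) + c / k| := by
  have hne : (k : ℤ) * m + c ≠ 0 := fun h => hc ⟨-m, by linarith⟩
  have hone : (1 : ℝ) ≤ |(((k : ℤ) * m + c : ℤ) : ℝ)| := by exact_mod_cast Int.one_le_abs hne
  have hk' : (0 : ℝ) < k := by exact_mod_cast hk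
  rw [show (m : ℝ) + c / k = (((k : ℤ) * m + c : ℤ) : ℝ) / k by push_cast; field_simp,
    abs_div, abs_of_pos hk', inv_eq_one_div]
  gcongr

lemma inv_48_le_abs_intCast_add_betaR (j : ℕ) (m : ℤ) : (48 : ℝ)⁻¹ ≤ |(m : ℝ) + betaR j| := by
  have hcoset := fun c hc => inv_le_abs_intCast_add_div (k := 48) (by norm_num) m c hc
  rcases j with _ | _ | _
  · simpa [betaR] using hcoset 1 (by norm_num)
  · simpa [betaR] using hcoset 25 (by norm_num)
  · simpa [betaR, show (46 / 48 : ℝ) = 23 / 24 by norm_num] using hcoset 46 (by norm_num)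

lemma cast_intCast_add_betaQ (j : ℕ) (m : ℤ) : (((m : ℚ) + betaQ j : ℚ) : ℝ) = m + betaR j := by
  rcases j with _ | _ | _ <;> simp [betaQ, betaR]

/-- Corollary A.3: `d_j(n) ≪ √|n|`. -/
theorem statement19 :
    ∃ C : ℝ, 0 < C ∧ ∀ j : ℕ, j < 3 → ∀ m : ℤ,
      |dInt j m| ≤ C * Real.sqrt |(m : ℝ) + betaR j| := by
  refine ⟨72, by norm_num, fun j _ m => ?_⟩
  have hd : |dInt j m| ≤ 8 * (2 * √|(m : ℝ) + betaR j| + 1) := by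
    simpa only [dInt, cast_intCast_add_betaQ] using abs_dCoef_le j ((m : ℚ) + betaQ j)
  have hs : (7 : ℝ)⁻¹ ≤ √|(m : ℝ) + betaR j| := by
    rw [Real.le_sqrt (by norm_num) (abs_nonneg _)]
    linarith [inv_48_le_abs_intCast_add_betaR j m]
  linarith

end Paper
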